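/- arXiv:2107.01471 — 4 statements merged into one kernel-verified Lean document; each statement's English description precedes it below -/
import Mathlib

section
/- The function g attains a maximum value b over [0,1]², the maximum is attained at some point (μ₀, λ₀) with μ₀ ∈ (0.58, 0.59) and λ₀ ∈ (0.81, 0.82), and b satisfies 0.3393 < b < 0.3394. -/
open scoped BigOperators Classical
open Matrix Filter

noncomputable section

namespace TS

/-- The probability simplex in `ℝ^k`. -/
def Δ (k : ℕ) : Set (Fin k → ℝ) := {x | (∀ i, 0 ≤ x i) ∧ ∑ i, x i = 1}

/-- Maximum entry of a vector. -/
def vmax {k : ℕ} (u : Fin k → ℝ) : ℝ := ⨆ i, u i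

/-- Maximum entry of a vector over an index set. -/
def vmaxOn {k : ℕ} (S : Set (Fin k)) (u : Fin k → ℝ) : ℝ := ⨆ i ∈ S, u i

/-- The support of a vector: indices with positive entries. -/
def supp {k : ℕ} (u : Fin k → ℝ) : Set (Fin k) := {i | 0 < u i}

/-- The set of indices where `u` attains its maximum entry. -/
def suppmax {k : ℕ} (u : Fin k → ℝ) : Set (Fin k) := {i | ∀ j, u j ≤ u i}

/-- The set of indices where `u` attains its minimum entry. -/
def suppmin {k : ℕ} (u : Fin k → ℝ) : Set (Fin k) := {i | ∀ j, u i ≤ u j}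

variable {m n : ℕ}

/-- `f_R(x,y) = max(Ry) − xᵀRy`. -/
def fR (R : Matrix (Fin m) (Fin n) ℝ) (x : Fin m → ℝ) (y : Fin n → ℝ) : ℝ :=
  vmax (R.mulVec y) - x ⬝ᵥ R.mulVec y

/-- `f_C(x,y) = max(Cᵀx) − xᵀCy`. -/
def fC (C : Matrix (Fin m) (Fin n) ℝ) (x : Fin m → ℝ) (y : Fin n → ℝ) : ℝ :=
  vmax (Matrix.vecMul x C) - x ⬝ᵥ C.mulVec y

/-- `f(x,y) = max{f_R(x,y), f_C(x,y)}`. -/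
def fNE (R C : Matrix (Fin m) (Fin n) ℝ) (x : Fin m → ℝ) (y : Fin n → ℝ) : ℝ :=
  max (fR R x y) (fC C x y)

/-- `S_R(y) = suppmax(Ry)`. -/
def SR (R : Matrix (Fin m) (Fin n) ℝ) (y : Fin n → ℝ) : Set (Fin m) := suppmax (R.mulVec y)

/-- `S_C(x) = suppmax(Cᵀx)`. -/
def SC (C : Matrix (Fin m) (Fin n) ℝ) (x : Fin m → ℝ) : Set (Fin n) := suppmax (Matrix.vecMul x C)

/-- `g` has right (one-sided) derivative `d` at `0`: `lim_{θ→0⁺} (g θ − g 0)/θ = d`. -/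
def HasPosDeriv (g : ℝ → ℝ) (d : ℝ) : Prop :=
  Tendsto (fun θ : ℝ => (g θ - g 0) / θ) (nhdsWithin 0 (Set.Ioi 0)) (nhds d)

/-- `(x,y)` is a stationary point: for every `(x',y')` in the product simplex, the scaled
directional derivative `Df(x,y,x',y')` of `f` exists and is nonnegative. -/
def IsStationary (R C : Matrix (Fin m) (Fin n) ℝ) (x : Fin m → ℝ) (y : Fin n → ℝ) : Prop :=
  ∀ x' ∈ Δ m, ∀ y' ∈ Δ n, ∃ d : ℝ,
    HasPosDeriv (fun θ : ℝ => fNE R C (x + θ • (x' - x)) (y + θ • (y' - y))) d ∧ 0 ≤ d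

/-- The function `T(x,y,x',y',ρ,w,z)`. -/
def Tfun (R C : Matrix (Fin m) (Fin n) ℝ) (x : Fin m → ℝ) (y : Fin n → ℝ)
    (x' : Fin m → ℝ) (y' : Fin n → ℝ) (ρ : ℝ) (w : Fin m → ℝ) (z : Fin n → ℝ) : ℝ :=
  ρ * (w ⬝ᵥ R.mulVec y' - x ⬝ᵥ R.mulVec y' - x' ⬝ᵥ R.mulVec y + x ⬝ᵥ R.mulVec y)
    + (1 - ρ) * (x' ⬝ᵥ C.mulVec z - x ⬝ᵥ C.mulVec y' - x' ⬝ᵥ C.mulVec y + x ⬝ᵥ C.mulVec y)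

/-- Feasibility for the tuple `(ρ,w,z)`: `ρ ∈ [0,1]`, `w ∈ Δ_m` with `supp w ⊆ S_R(y)`,
`z ∈ Δ_n` with `supp z ⊆ S_C(x)`. -/
def dualFeasible (R C : Matrix (Fin m) (Fin n) ℝ) (x : Fin m → ℝ) (y : Fin n → ℝ)
    (ρ : ℝ) (w : Fin m → ℝ) (z : Fin n → ℝ) : Prop :=
  ρ ∈ Set.Icc (0:ℝ) 1 ∧ w ∈ Δ m ∧ supp w ⊆ SR R y ∧ z ∈ Δ n ∧ supp z ⊆ SC C x

/-- `max_{ρ,w,z} T(x,y,x',y',ρ,w,z)` over feasible `(ρ,w,z)`. -/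
def innerMax (R C : Matrix (Fin m) (Fin n) ℝ) (x : Fin m → ℝ) (y : Fin n → ℝ)
    (x' : Fin m → ℝ) (y' : Fin n → ℝ) : ℝ :=
  sSup {t : ℝ | ∃ ρ w z, dualFeasible R C x y ρ w z ∧ t = Tfun R C x y x' y' ρ w z}

/-- `V(x,y) = min_{(x',y') ∈ Δ_m×Δ_n} max_{ρ,w,z} T(x,y,x',y',ρ,w,z)`. -/
def Vval (R C : Matrix (Fin m) (Fin n) ℝ) (x : Fin m → ℝ) (y : Fin n → ℝ) : ℝ :=
  sInf {t : ℝ | ∃ x' ∈ Δ m, ∃ y' ∈ Δ n, t = innerMax R C x y x' y'}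

/-- `min_{(x',y') ∈ Δ_m×Δ_n} T(x,y,x',y',ρ,w,z)`. -/
def innerMin (R C : Matrix (Fin m) (Fin n) ℝ) (x : Fin m → ℝ) (y : Fin n → ℝ)
    (ρ : ℝ) (w : Fin m → ℝ) (z : Fin n → ℝ) : ℝ :=
  sInf {t : ℝ | ∃ x' ∈ Δ m, ∃ y' ∈ Δ n, t = Tfun R C x y x' y' ρ w z}

/-- `(ρ,w,z)` is a dual solution at `(x,y)`. -/
def IsDualSolution (R C : Matrix (Fin m) (Fin n) ℝ) (x : Fin m → ℝ) (y : Fin n → ℝ)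
    (ρ : ℝ) (w : Fin m → ℝ) (z : Fin n → ℝ) : Prop :=
  dualFeasible R C x y ρ w z ∧ Vval R C x y = innerMin R C x y ρ w z

/-- `(x,y)` is an `ε`-approximate Nash equilibrium. -/
def IsEpsNash (R C : Matrix (Fin m) (Fin n) ℝ) (x : Fin m → ℝ) (y : Fin n → ℝ) (ε : ℝ) : Prop :=
  (∀ x' ∈ Δ m, x' ⬝ᵥ R.mulVec y ≤ x ⬝ᵥ R.mulVec y + ε) ∧
  (∀ y' ∈ Δ n, x ⬝ᵥ C.mulVec y' ≤ x ⬝ᵥ C.mulVec y + ε)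

/-- A Nash equilibrium is a `0`-approximate Nash equilibrium. -/
def IsNash (R C : Matrix (Fin m) (Fin n) ℝ) (x : Fin m → ℝ) (y : Fin n → ℝ) : Prop :=
  IsEpsNash R C x y 0

/-- `λ* = (w*−x*)ᵀRz*`. -/
def lamStar (R : Matrix (Fin m) (Fin n) ℝ) (xs ws : Fin m → ℝ) (zs : Fin n → ℝ) : ℝ :=
  (ws - xs) ⬝ᵥ R.mulVec zs

/-- `μ* = w*ᵀC(z*−y*)`. -/
def muStar (C : Matrix (Fin m) (Fin n) ℝ) (ws : Fin m → ℝ) (ys zs : Fin n → ℝ) : ℝ :=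
  ws ⬝ᵥ C.mulVec (zs - ys)

/-- `p* = f_R(x*,z*)/(f_R(x*,z*)+f_C(w*,z*)−f_R(w*,z*))` (`= 0` if the denominator is `0`,
by the real-division-by-zero convention). -/
def pstar (R C : Matrix (Fin m) (Fin n) ℝ) (xs ws : Fin m → ℝ) (zs : Fin n → ℝ) : ℝ :=
  fR R xs zs / (fR R xs zs + fC C ws zs - fR R ws zs)

/-- `q* = f_C(w*,y*)/(f_C(w*,y*)+f_R(w*,z*)−f_C(w*,z*))` (`= 0` if the denominator is `0`). -/
def qstar (R C : Matrix (Fin m) (Fin n) ℝ) (ws : Fin m → ℝ) (ys zs : Fin n → ℝ) : ℝ :=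
  fC C ws ys / (fC C ws ys + fR R ws zs - fC C ws zs)

/-- The adjusted pair `(ũ,ṽ)` of Method 3. -/
def tildeUV (R C : Matrix (Fin m) (Fin n) ℝ) (xs : Fin m → ℝ) (ys : Fin n → ℝ)
    (ws : Fin m → ℝ) (zs : Fin n → ℝ) : (Fin m → ℝ) × (Fin n → ℝ) :=
  if fR R ws zs ≤ fC C ws zs then
    (pstar R C xs ws zs • ws + (1 - pstar R C xs ws zs) • xs, zs)
  else
    (ws, qstar R C ws ys zs • zs + (1 - qstar R C ws ys zs) • ys)

/-- `g(s,t) = min{st/(s+t), (1−s)/(1+t−s)}`; by real division-by-zero conventions,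
`st/(s+t)` is `0` when `s = t = 0`. -/
def gTS (s t : ℝ) : ℝ := min (s * t / (s + t)) ((1 - s) / (1 + t - s))

/-- `b = max_{(s,t) ∈ [0,1]²} g(s,t)`. -/
def bTS : ℝ := sSup {r : ℝ | ∃ s ∈ Set.Icc (0:ℝ) 1, ∃ t ∈ Set.Icc (0:ℝ) 1, r = gTS s t}

/-- `g` attains a maximum `b` over `[0,1]²` at some `(mu0,lam0)` with
`mu0 ∈ (0.58, 0.59)`, `lam0 ∈ (0.81, 0.82)`, and `0.3393 < b < 0.3394`. -/
theorem stmt12 :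
    ∃ b mu0 lam0 : ℝ,
      mu0 ∈ Set.Ioo (0.58 : ℝ) 0.59 ∧ lam0 ∈ Set.Ioo (0.81 : ℝ) 0.82 ∧
      gTS mu0 lam0 = b ∧
      (∀ s ∈ Set.Icc (0:ℝ) 1, ∀ t ∈ Set.Icc (0:ℝ) 1, gTS s t ≤ b) ∧
      0.3393 < b ∧ b < 0.3394 := by
  -- Find the root u of 2u⁴ − 2u³ + 2u − 1 in (0.5825, 0.58255).
  obtain ⟨u, hu, hroot⟩ :
      ∃ u ∈ Set.Ioo (0.5825 : ℝ) 0.58255, 2*u^4 - 2*u^3 + 2*u - 1 = 0 := by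
    have hc : ContinuousOn (fun u : ℝ => 2*u^4 - 2*u^3 + 2*u - 1)
        (Set.Icc (0.5825 : ℝ) 0.58255) := by fun_prop
    have hsub := intermediate_value_Ioo (by norm_num : (0.5825 : ℝ) ≤ 0.58255) hc
    have h0 : (0:ℝ) ∈ Set.Ioo ((fun u : ℝ => 2*u^4 - 2*u^3 + 2*u - 1) 0.5825)
        ((fun u : ℝ => 2*u^4 - 2*u^3 + 2*u - 1) 0.58255) := by
      constructor <;> norm_num
    obtain ⟨u, hu, hfu⟩ := hsub h0
    exact ⟨u, hu, hfu⟩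
  obtain ⟨hu1, hu2⟩ := hu
  have h1u : (0:ℝ) < 1 - u := by nlinarith
  have hupos : (0:ℝ) < u := by nlinarith
  refine ⟨u^2, u, u^2 / (1 - u), ?_, ?_, ?_, ?_, ?_, ?_⟩
  · exact ⟨by nlinarith, by nlinarith⟩
  · constructor
    · rw [lt_div_iff₀ h1u]; nlinarith
    · rw [div_lt_iff₀ h1u]; nlinarith
  · -- gTS u (u²/(1−u)) = u²
    have e1 : u * (u^2 / (1 - u)) / (u + u^2 / (1 - u)) = u^2 := by
      rw [div_eq_iff]
      · field_simp
        ring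
      · have : u + u^2 / (1 - u) = u / (1 - u) := by field_simp; ring
        rw [this]
        positivity
    have e2 : (1 - u) / (1 + u^2 / (1 - u) - u) = u^2 := by
      rw [div_eq_iff]
      · field_simp
        nlinarith [hroot]
      · have : 1 + u^2 / (1 - u) - u = ((1-u)^2 + u^2) / (1 - u) := by
          field_simp; ring
        rw [this]
        positivity
    unfold gTS
    rw [e1, e2, min_self]
  · -- global upper bound
    rintro s ⟨hs0, hs1⟩ t ⟨ht0, ht1⟩
    by_contra hcon
    push_neg at hcon
    have hbpos : (0:ℝ) < u^2 := by positivity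
    have hA : u^2 < s * t / (s + t) := lt_of_lt_of_le hcon (min_le_left _ _)
    have hB : u^2 < (1 - s) / (1 + t - s) := lt_of_lt_of_le hcon (min_le_right _ _)
    -- denominators positive
    have hd1 : 0 < s + t := by
      rcases lt_or_eq_of_le (by linarith : (0:ℝ) ≤ s + t) with h | h
      · exact h
      · exfalso; rw [← h] at hA; simp at hA; linarith
    have hd2 : 0 < 1 + t - s := by
      rcases lt_or_eq_of_le (by linarith : (0:ℝ) ≤ 1 + t - s) with h | h
      · exact h
      · exfalso; rw [← h, div_zero] at hB; linarith
    have hst : u^2 * (s + t) < s * t := by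
      rw [lt_div_iff₀ hd1] at hA; linarith
    have hts : u^2 * (1 + t - s) < 1 - s := by
      rw [lt_div_iff₀ hd2] at hB; linarith
    -- bt < (1-s)(1-b)
    have hbt : u^2 * t < (1 - s) * (1 - u^2) := by nlinarith
    have hspos : 0 < s := by nlinarith
    have htpos : 0 < t := by nlinarith
    have hsb : u^2 < s := by nlinarith
    -- key: b²s < (1-b)(1-s)(s-b)
    have hkey : u^2 * u^2 * s < (1 - u^2) * (1 - s) * (s - u^2) := by
      have m1 : (u^2 * t) * (s - u^2) < ((1 - s) * (1 - u^2)) * (s - u^2) :=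
        mul_lt_mul_of_pos_right hbt (by linarith)
      nlinarith
    have hid : (1 - u^2) * (s - u)^2
        = u^2 * u^2 * s - (1 - u^2) * (1 - s) * (s - u^2)
          - s * (2*u^4 - 2*u^3 + 2*u - 1) := by ring
    rw [hroot, mul_zero, sub_zero] at hid
    have hnn : (0:ℝ) ≤ (1 - u^2) * (s - u)^2 :=
      mul_nonneg (by nlinarith) (sq_nonneg _)
    linarith
  · nlinarith [mul_lt_mul_of_pos_left hu1 hupos, sq_nonneg (u - 0.5825)]
  · nlinarith [mul_lt_mul_of_pos_left hu2 hupos]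

end TS
end
end

section
/- Let b ∈ ℝ and μ₀, λ₀ ∈ (0,1) satisfy μ₀λ₀/(μ₀+λ₀) = (1−μ₀)/(1+λ₀−μ₀) = b, 0.3393 < b < 0.3394, 0.58 < μ₀ < 0.59, and 0.81 < λ₀ < 0.82. Consider the 3×3 bimatrix game with R = [[0.1, 0, 0], [0.1+b, 1, 1], [0.1+b, λ₀, λ₀]] and C = [[0.1, 0.1+b, 0.1+b], [0, 1, μ₀], [0, 1, μ₀]]. Then, with x* = y* = (1,0,0)ᵀ and w* = z* = (0,0,1)ᵀ: (x*,y*) is a stationary point with dual solution (ρ*, w*, z*) where ρ* = μ₀/(λ₀+μ₀); f(x*,y*) = b; and f(αw*+(1−α)x*, βz*+(1−β)y*) ≥ b for all α, β ∈ [0,1]. -/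
open scoped BigOperators Classical
open Matrix Filter

noncomputable section

namespace TS

variable {m n : ℕ}

private lemma vmax_eq3 (u : Fin 3 → ℝ) (i : Fin 3) (h : ∀ j, u j ≤ u i) : vmax u = u i :=
  le_antisymm (ciSup_le h) (le_ciSup (Set.Finite.bddAbove (Set.finite_range u)) i)

private lemma sum3 {x : Fin 3 → ℝ} (hx : x ∈ Δ 3) : x 0 + x 1 + x 2 = 1 := by
  have := hx.2; rwa [Fin.sum_univ_three] at this

private lemma dot_mulVec_Icc {m n : ℕ} (M : Matrix (Fin m) (Fin n) ℝ)
    (hM : ∀ i j, M i j ∈ Set.Icc (0:ℝ) 1) {u : Fin m → ℝ} {v : Fin n → ℝ}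
    (hu : u ∈ Δ m) (hv : v ∈ Δ n) : u ⬝ᵥ M.mulVec v ∈ Set.Icc (0:ℝ) 1 := by
  have hMv : ∀ i, M.mulVec v i ∈ Set.Icc (0:ℝ) 1 := by
    intro i
    have h1 : M.mulVec v i = ∑ j, M i j * v j := rfl
    constructor
    · rw [h1]
      exact Finset.sum_nonneg fun j _ => mul_nonneg (hM i j).1 (hv.1 j)
    · rw [h1]
      calc (∑ j, M i j * v j) ≤ ∑ j, v j :=
            Finset.sum_le_sum fun j _ => by nlinarith [(hM i j).1, (hM i j).2, hv.1 j]
        _ = 1 := hv.2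
  have h2 : u ⬝ᵥ M.mulVec v = ∑ i, u i * M.mulVec v i := rfl
  constructor
  · rw [h2]
    exact Finset.sum_nonneg fun i _ => mul_nonneg (hu.1 i) (hMv i).1
  · rw [h2]
    calc (∑ i, u i * M.mulVec v i) ≤ ∑ i, u i :=
          Finset.sum_le_sum fun i _ => by nlinarith [(hMv i).1, (hMv i).2, hu.1 i]
      _ = 1 := hu.2

set_option maxHeartbeats 1000000 in
private lemma core_ineq {b mu0 lam0 α β : ℝ}
    (hb3 : 0.3393 < b) (hb4 : b < 0.3394)
    (hmupos : 0 < mu0) (hmult1 : mu0 < 1) (hlampos : 0 < lam0) (hlamlt1 : lam0 < 1)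
    (hmu0' : 0.58 < mu0) (hmu0'' : mu0 < 0.59) (hlam0' : 0.81 < lam0) (hlam0'' : lam0 < 0.82)
    (hb2' : 1 - mu0 = b * (1 + lam0 - mu0))
    (hα0 : 0 ≤ α) (hα1 : α ≤ 1) (hβ0 : 0 ≤ β) (hβ1 : β ≤ 1) :
    b ≤ max (b * (1 - α) * (1 - β) + β * (1 - α * lam0))
        (b * (1 - α) * (1 - β) + α * (1 - mu0 * β)) := by
  have hb0 : (0:ℝ) < b := by linarith
  have hid : b * lam0 = (1 - b) * (1 - mu0) := by nlinarith [hb2']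
  by_contra hcon
  push_neg at hcon
  obtain ⟨hX, hY⟩ := max_lt_iff.mp hcon
  have hg : β * (1 - α * lam0) < b * (α + β - α * β) := by nlinarith [hX]
  have hh : α * (1 - mu0 * β) < b * (α + β - α * β) := by nlinarith [hY]
  rcases le_or_gt (α * (1 - mu0)) b with hc | hc
  · rcases eq_or_lt_of_le hα0 with h0 | hαpos
    · rw [← h0] at hg
      nlinarith [hg, mul_nonneg hβ0 (by linarith : (0:ℝ) ≤ 1 - b)]
    · have hp1 : 0 < 1 - b - α * lam0 + b * α := by nlinarith
      have hp2 : 0 < α * mu0 + b * (1 - α) := by nlinarith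
      have hL1 : α * (1 - b) < β * (α * mu0 + b * (1 - α)) := by nlinarith [hh]
      have hL2 : β * (1 - b - α * lam0 + b * α) < b * α := by nlinarith [hg]
      have key : α * (1 - b) * (1 - b - α * lam0 + b * α) <
          b * α * (α * mu0 + b * (1 - α)) := by
        calc α * (1 - b) * (1 - b - α * lam0 + b * α)
            < (β * (α * mu0 + b * (1 - α))) * (1 - b - α * lam0 + b * α) :=
              mul_lt_mul_of_pos_right hL1 hp1
          _ = (β * (1 - b - α * lam0 + b * α)) * (α * mu0 + b * (1 - α)) := by ring
          _ < (b * α) * (α * mu0 + b * (1 - α)) := mul_lt_mul_of_pos_right hL2 hp2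
      have hmul : α * (1 - mu0) * (lam0 + mu0 - 1) ≤ b * (lam0 + mu0 - 1) :=
        mul_le_mul_of_nonneg_right hc (by linarith)
      have hE' : 0 ≤ (1 - mu0) * ((1 - 2 * b) - α * (lam0 + mu0 - 1)) := by
        nlinarith [hmul, hid, sq_nonneg α]
      have hE : 0 ≤ (1 - 2 * b) - α * (lam0 + mu0 - 1) := by
        by_contra hcon2
        push_neg at hcon2
        nlinarith [hE', mul_pos (show (0:ℝ) < 1 - mu0 by linarith)
          (show (0:ℝ) < -((1 - 2 * b) - α * (lam0 + mu0 - 1)) by linarith)]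
      have hb2q : α ^ 2 * (1 - mu0) = α ^ 2 * (b * (1 + lam0 - mu0)) := by rw [← hb2']
      have key2 : α * ((1 - 2 * b) - α * (lam0 + mu0 - 1)) < 0 := by
        linarith [key, hb2q]
      nlinarith [mul_nonneg hα0 hE, key2]
  · nlinarith [hh, mul_nonneg (by linarith : (0:ℝ) ≤ 1 - β)
      (mul_nonneg hα0 (by linarith : (0:ℝ) ≤ 1 - b)),
      mul_nonneg hβ0 (by linarith : (0:ℝ) ≤ α * (1 - mu0) - b)]

set_option maxHeartbeats 1600000 in
/-- the tight `0.3393` instance. -/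
theorem stmt13 (b mu0 lam0 : ℝ)
    (hmu0 : mu0 ∈ Set.Ioo (0:ℝ) 1) (hlam0 : lam0 ∈ Set.Ioo (0:ℝ) 1)
    (hb1 : mu0 * lam0 / (mu0 + lam0) = b) (hb2 : (1 - mu0) / (1 + lam0 - mu0) = b)
    (hb3 : 0.3393 < b) (hb4 : b < 0.3394)
    (hmu0' : 0.58 < mu0) (hmu0'' : mu0 < 0.59) (hlam0' : 0.81 < lam0) (hlam0'' : lam0 < 0.82) :
    IsStationary
      !![(0.1 : ℝ), 0, 0; 0.1 + b, 1, 1; 0.1 + b, lam0, lam0]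
      !![(0.1 : ℝ), 0.1 + b, 0.1 + b; 0, 1, mu0; 0, 1, mu0]
      ![1, 0, 0] ![1, 0, 0] ∧
    IsDualSolution
      !![(0.1 : ℝ), 0, 0; 0.1 + b, 1, 1; 0.1 + b, lam0, lam0]
      !![(0.1 : ℝ), 0.1 + b, 0.1 + b; 0, 1, mu0; 0, 1, mu0]
      ![1, 0, 0] ![1, 0, 0] (mu0 / (lam0 + mu0)) ![0, 0, 1] ![0, 0, 1] ∧
    fNE
      !![(0.1 : ℝ), 0, 0; 0.1 + b, 1, 1; 0.1 + b, lam0, lam0]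
      !![(0.1 : ℝ), 0.1 + b, 0.1 + b; 0, 1, mu0; 0, 1, mu0]
      ![1, 0, 0] ![1, 0, 0] = b ∧
    (∀ α ∈ Set.Icc (0:ℝ) 1, ∀ β ∈ Set.Icc (0:ℝ) 1,
      b ≤ fNE
        !![(0.1 : ℝ), 0, 0; 0.1 + b, 1, 1; 0.1 + b, lam0, lam0]
        !![(0.1 : ℝ), 0.1 + b, 0.1 + b; 0, 1, mu0; 0, 1, mu0]
        (α • ![(0:ℝ), 0, 1] + (1 - α) • ![1, 0, 0])
        (β • ![0, 0, 1] + (1 - β) • ![(1:ℝ), 0, 0])) := by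
  obtain ⟨hmupos, hmult1⟩ := hmu0
  obtain ⟨hlampos, hlamlt1⟩ := hlam0
  have hb0 : 0 < b := by linarith
  set R := !![(0.1 : ℝ), 0, 0; 0.1 + b, 1, 1; 0.1 + b, lam0, lam0] with hRdef
  set C := !![(0.1 : ℝ), 0.1 + b, 0.1 + b; 0, 1, mu0; 0, 1, mu0] with hCdef
  -- basic algebraic facts
  have hlm0 : (0:ℝ) < lam0 + mu0 := by linarith
  have hb1' : mu0 * lam0 = b * (mu0 + lam0) := by
    rw [div_eq_iff (by positivity : mu0 + lam0 ≠ 0)] at hb1; linarith [hb1]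
  have hb2' : 1 - mu0 = b * (1 + lam0 - mu0) := by
    rw [div_eq_iff (by linarith : 1 + lam0 - mu0 ≠ 0)] at hb2; linarith [hb2]
  have hid : b * lam0 = (1 - b) * (1 - mu0) := by nlinarith [hb2']
  have hrl : mu0 / (lam0 + mu0) * lam0 = b := by
    rw [div_mul_eq_mul_div, div_eq_iff (ne_of_gt hlm0)]; linear_combination hb1'
  have hrm : (1 - mu0 / (lam0 + mu0)) * mu0 = b := by
    field_simp
    linear_combination hb1'
  -- component helpers
  have hdot3 : ∀ (x : Fin 3 → ℝ) (p q r : ℝ), x ⬝ᵥ ![p, q, r] = x 0 * p + x 1 * q + x 2 * r := by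
    intro x p q r
    simp [dotProduct, Fin.sum_univ_three, Matrix.vecHead, Matrix.vecTail]
  have hRmul : ∀ y : Fin 3 → ℝ, R.mulVec y =
      ![0.1 * y 0, (0.1 + b) * y 0 + y 1 + y 2,
        (0.1 + b) * y 0 + lam0 * y 1 + lam0 * y 2] := by
    intro y; funext i
    fin_cases i <;>
      simp [hRdef, Matrix.mulVec, dotProduct, Fin.sum_univ_three, Matrix.vecHead,
        Matrix.vecTail] <;> ring
  have hCmul : ∀ y : Fin 3 → ℝ, C.mulVec y =
      ![0.1 * y 0 + (0.1 + b) * y 1 + (0.1 + b) * y 2, y 1 + mu0 * y 2, y 1 + mu0 * y 2] := by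
    intro y; funext i
    fin_cases i <;>
      simp [hCdef, Matrix.mulVec, dotProduct, Fin.sum_univ_three, Matrix.vecHead,
        Matrix.vecTail] <;> ring
  have hCvec : ∀ x : Fin 3 → ℝ, Matrix.vecMul x C =
      ![0.1 * x 0, (0.1 + b) * x 0 + x 1 + x 2,
        (0.1 + b) * x 0 + mu0 * x 1 + mu0 * x 2] := by
    intro x; funext i
    fin_cases i <;>
      simp [hCdef, Matrix.vecMul, dotProduct, Fin.sum_univ_three, Matrix.vecHead,
        Matrix.vecTail] <;> ring
  have hdRy : ∀ x y : Fin 3 → ℝ, x ⬝ᵥ R.mulVec y =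
      x 0 * (0.1 * y 0) + x 1 * ((0.1 + b) * y 0 + y 1 + y 2) +
        x 2 * ((0.1 + b) * y 0 + lam0 * y 1 + lam0 * y 2) := by
    intro x y; rw [hRmul y, hdot3]
  have hdCy : ∀ x y : Fin 3 → ℝ, x ⬝ᵥ C.mulVec y =
      x 0 * (0.1 * y 0 + (0.1 + b) * y 1 + (0.1 + b) * y 2) + x 1 * (y 1 + mu0 * y 2) +
        x 2 * (y 1 + mu0 * y 2) := by
    intro x y; rw [hCmul y, hdot3]
  have hvmax3 : ∀ c y0 y1 y2 : ℝ, 0 ≤ y0 → 0 ≤ y1 → 0 ≤ y2 → 0 ≤ c → c ≤ 1 →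
      vmax ![0.1 * y0, (0.1 + b) * y0 + y1 + y2, (0.1 + b) * y0 + c * y1 + c * y2] =
        (0.1 + b) * y0 + y1 + y2 := by
    intro c y0 y1 y2 h0 h1 h2 hc0 hc1
    have h := vmax_eq3 ![0.1 * y0, (0.1 + b) * y0 + y1 + y2,
        (0.1 + b) * y0 + c * y1 + c * y2] 1 ?_
    · simpa using h
    · intro j
      fin_cases j <;> simp [Matrix.vecHead, Matrix.vecTail] <;> nlinarith
  have hfRval : ∀ x y : Fin 3 → ℝ, 0 ≤ y 0 → 0 ≤ y 1 → 0 ≤ y 2 →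
      fR R x y = (0.1 + b) * y 0 + y 1 + y 2 -
        (x 0 * (0.1 * y 0) + x 1 * ((0.1 + b) * y 0 + y 1 + y 2) +
          x 2 * ((0.1 + b) * y 0 + lam0 * y 1 + lam0 * y 2)) := by
    intro x y h0 h1 h2
    unfold fR
    rw [hdRy, hRmul y, hvmax3 lam0 (y 0) (y 1) (y 2) h0 h1 h2 hlampos.le hlamlt1.le]
  have hfCval : ∀ x y : Fin 3 → ℝ, 0 ≤ x 0 → 0 ≤ x 1 → 0 ≤ x 2 →
      fC C x y = (0.1 + b) * x 0 + x 1 + x 2 -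
        (x 0 * (0.1 * y 0 + (0.1 + b) * y 1 + (0.1 + b) * y 2) + x 1 * (y 1 + mu0 * y 2) +
          x 2 * (y 1 + mu0 * y 2)) := by
    intro x y h0 h1 h2
    unfold fC
    rw [hdCy, hCvec x, hvmax3 mu0 (x 0) (x 1) (x 2) h0 h1 h2 hmupos.le hmult1.le]
  have he1 : (![1, 0, 0] : Fin 3 → ℝ) ∈ Δ 3 := by
    refine ⟨fun i => ?_, ?_⟩
    · fin_cases i <;> norm_num
    · simp [Fin.sum_univ_three]
  have he3 : (![0, 0, 1] : Fin 3 → ℝ) ∈ Δ 3 := by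
    refine ⟨fun i => ?_, ?_⟩
    · fin_cases i <;> norm_num
    · simp [Fin.sum_univ_three]
  have hRe1 : R.mulVec ![1, 0, 0] = ![0.1, 0.1 + b, 0.1 + b] := by
    rw [hRmul]; funext i; fin_cases i <;> simp [Matrix.vecHead, Matrix.vecTail]
  have hCve1 : Matrix.vecMul ![1, 0, 0] C = ![0.1, 0.1 + b, 0.1 + b] := by
    rw [hCvec]; funext i; fin_cases i <;> simp [Matrix.vecHead, Matrix.vecTail]
  -- PART 3 : fNE = b
  have hpart3 : fNE R C ![1, 0, 0] ![1, 0, 0] = b := by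
    unfold fNE
    have h2 : (![1, 0, 0] : Fin 3 → ℝ) 2 = 0 := rfl
    rw [hfRval _ _ (by norm_num) (by norm_num) (by norm_num [h2]),
      hfCval _ _ (by norm_num) (by norm_num) (by norm_num [h2])]
    norm_num [h2]
  -- T at the dual witness is constantly b
  have hTb1 : ∀ x', x' ∈ Δ 3 → ∀ y', y' ∈ Δ 3 →
      Tfun R C ![1, 0, 0] ![1, 0, 0] x' y' (mu0 / (lam0 + mu0)) ![0, 0, 1] ![0, 0, 1] = b := by
    intro x' hx' y' hy'
    have hxs := sum3 hx'; have hys := sum3 hy'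
    unfold Tfun
    simp only [hdRy, hdCy]
    simp only [Matrix.cons_val_zero, Matrix.cons_val_one, Matrix.head_cons,
      Matrix.cons_val_two, Matrix.tail_cons]
    rw [show x' 0 = 1 - x' 1 - x' 2 by linarith, show y' 0 = 1 - y' 1 - y' 2 by linarith]
    linear_combination (y' 1 + y' 2) * hrl + (x' 1 + x' 2) * hrm
  -- entries of R and C lie in [0,1]
  have hRent : ∀ i j, R i j ∈ Set.Icc (0:ℝ) 1 := by
    intro i j
    fin_cases i <;> fin_cases j <;>
      simp [hRdef, Set.mem_Icc, Matrix.vecHead, Matrix.vecTail] <;> constructor <;> linarith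
  have hCent : ∀ i j, C i j ∈ Set.Icc (0:ℝ) 1 := by
    intro i j
    fin_cases i <;> fin_cases j <;>
      simp [hCdef, Set.mem_Icc, Matrix.vecHead, Matrix.vecTail] <;> constructor <;> linarith
  -- feasibility of the dual witness
  have hfeas : dualFeasible R C ![1, 0, 0] ![1, 0, 0] (mu0 / (lam0 + mu0)) ![0, 0, 1]
      ![0, 0, 1] := by
    refine ⟨⟨by positivity, ?_⟩, he3, ?_, he3, ?_⟩
    · rw [div_le_one hlm0]; linarith
    · intro i hi
      have hi' : 0 < (![0, 0, 1] : Fin 3 → ℝ) i := hi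
      fin_cases i
      · simp at hi'
      · simp at hi'
      · intro j
        rw [hRe1]
        fin_cases j <;> simp [Matrix.vecHead, Matrix.vecTail] <;> linarith
    · intro i hi
      have hi' : 0 < (![0, 0, 1] : Fin 3 → ℝ) i := hi
      fin_cases i
      · simp at hi'
      · simp at hi'
      · intro j
        show Matrix.vecMul ![1,0,0] C j ≤ Matrix.vecMul ![1,0,0] C 2
        rw [hCve1]
        fin_cases j <;> simp [Matrix.vecHead, Matrix.vecTail] <;> linarith
  -- T at (e1,e1,e1,e1) equals b for every feasible dual tuple
  have hTfeas : ∀ ρ w z, dualFeasible R C ![1, 0, 0] ![1, 0, 0] ρ w z →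
      Tfun R C ![1, 0, 0] ![1, 0, 0] ![1, 0, 0] ![1, 0, 0] ρ w z = b := by
    rintro ρ w z ⟨hρ, hw, hwsup, hz, hzsup⟩
    have hw0 : w 0 = 0 := by
      by_contra hne
      have h0 : (0 : Fin 3) ∈ supp w := lt_of_le_of_ne (hw.1 0) (Ne.symm hne)
      have h1 : (R.mulVec ![1,0,0]) 1 ≤ (R.mulVec ![1,0,0]) 0 := hwsup h0 1
      rw [hRe1] at h1
      simp [Matrix.vecHead, Matrix.vecTail] at h1
      linarith
    have hz0 : z 0 = 0 := by
      by_contra hne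
      have h0 : (0 : Fin 3) ∈ supp z := lt_of_le_of_ne (hz.1 0) (Ne.symm hne)
      have h1 : (Matrix.vecMul ![1,0,0] C) 1 ≤ (Matrix.vecMul ![1,0,0] C) 0 := hzsup h0 1
      rw [hCve1] at h1
      simp [Matrix.vecHead, Matrix.vecTail] at h1
      linarith
    have hws : w 1 + w 2 = 1 := by have := sum3 hw; linarith
    have hzs : z 1 + z 2 = 1 := by have := sum3 hz; linarith
    unfold Tfun
    simp only [hdRy, hdCy]
    simp only [Matrix.cons_val_zero, Matrix.cons_val_one, Matrix.head_cons,
      Matrix.cons_val_two, Matrix.tail_cons]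
    linear_combination (ρ * (0.1 + b)) * hws + (ρ * 0.1) * hw0 +
      ((1 - ρ) * (0.1 + b)) * hzs + ((1 - ρ) * 0.1) * hz0
  -- innerMin at the dual witness is b
  have hIMin : innerMin R C ![1, 0, 0] ![1, 0, 0] (mu0 / (lam0 + mu0)) ![0, 0, 1] ![0, 0, 1]
      = b := by
    unfold innerMin
    have hset : {t : ℝ | ∃ x' ∈ Δ 3, ∃ y' ∈ Δ 3,
        t = Tfun R C ![1, 0, 0] ![1, 0, 0] x' y' (mu0 / (lam0 + mu0)) ![0, 0, 1] ![0, 0, 1]}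
        = {b} := by
      apply Set.eq_singleton_iff_unique_mem.mpr
      constructor
      · exact ⟨![1, 0, 0], he1, ![1, 0, 0], he1, (hTb1 _ he1 _ he1).symm⟩
      · rintro t ⟨x', hx', y', hy', rfl⟩
        exact hTb1 _ hx' _ hy'
    rw [hset, csInf_singleton]
  -- innerMax at (e1,e1) is b
  have hIMaxE1 : innerMax R C ![1, 0, 0] ![1, 0, 0] ![1, 0, 0] ![1, 0, 0] = b := by
    unfold innerMax
    have hset : {t : ℝ | ∃ ρ w z, dualFeasible R C ![1, 0, 0] ![1, 0, 0] ρ w z ∧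
        t = Tfun R C ![1, 0, 0] ![1, 0, 0] ![1, 0, 0] ![1, 0, 0] ρ w z} = {b} := by
      apply Set.eq_singleton_iff_unique_mem.mpr
      constructor
      · exact ⟨_, _, _, hfeas, (hTfeas _ _ _ hfeas).symm⟩
      · rintro t ⟨ρ, w, z, hf, rfl⟩
        exact hTfeas _ _ _ hf
    rw [hset, csSup_singleton]
  -- Vval = b
  have hVval : Vval R C ![1, 0, 0] ![1, 0, 0] = b := by
    unfold Vval
    have hmemb : b ∈ {t : ℝ | ∃ x' ∈ Δ 3, ∃ y' ∈ Δ 3,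
        t = innerMax R C ![1, 0, 0] ![1, 0, 0] x' y'} :=
      ⟨![1, 0, 0], he1, ![1, 0, 0], he1, hIMaxE1.symm⟩
    have hlb : ∀ t ∈ {t : ℝ | ∃ x' ∈ Δ 3, ∃ y' ∈ Δ 3,
        t = innerMax R C ![1, 0, 0] ![1, 0, 0] x' y'}, b ≤ t := by
      rintro t ⟨x', hx', y', hy', rfl⟩
      unfold innerMax
      apply le_csSup
      · refine ⟨2, ?_⟩
        rintro r ⟨ρ, w, z, ⟨hρ, hw, -, hz, -⟩, rfl⟩
        have d1 := dot_mulVec_Icc R hRent hw hy'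
        have d2 := dot_mulVec_Icc R hRent he1 hy'
        have d3 := dot_mulVec_Icc R hRent hx' he1
        have d4 := dot_mulVec_Icc R hRent he1 he1
        have d5 := dot_mulVec_Icc C hCent hx' hz
        have d6 := dot_mulVec_Icc C hCent he1 hy'
        have d7 := dot_mulVec_Icc C hCent hx' he1
        have d8 := dot_mulVec_Icc C hCent he1 he1
        unfold Tfun
        have t1 : 0 ≤ ρ * (2 - (w ⬝ᵥ R.mulVec y' - ![1,0,0] ⬝ᵥ R.mulVec y' -
            x' ⬝ᵥ R.mulVec ![1,0,0] + ![1,0,0] ⬝ᵥ R.mulVec ![1,0,0])) :=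
          mul_nonneg hρ.1 (by linarith [d1.2, d2.1, d3.1, d4.2])
        have t2 : 0 ≤ (1 - ρ) * (2 - (x' ⬝ᵥ C.mulVec z - ![1,0,0] ⬝ᵥ C.mulVec y' -
            x' ⬝ᵥ C.mulVec ![1,0,0] + ![1,0,0] ⬝ᵥ C.mulVec ![1,0,0])) :=
          mul_nonneg (by linarith [hρ.2]) (by linarith [d5.2, d6.1, d7.1, d8.2])
        nlinarith [t1, t2]
      · exact ⟨_, _, _, hfeas, (hTb1 _ hx' _ hy').symm⟩
    exact le_antisymm (csInf_le ⟨b, fun t ht => hlb t ht⟩ hmemb) (le_csInf ⟨b, hmemb⟩ hlb)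
  -- PART 1 : stationarity
  have hstat : IsStationary R C ![1, 0, 0] ![1, 0, 0] := by
    intro x' hx' y' hy'
    have hxs := sum3 hx'; have hys := sum3 hy'
    have hx1 := hx'.1 1; have hx2 := hx'.1 2; have hx0 := hx'.1 0
    have hy1 := hy'.1 1; have hy2 := hy'.1 2; have hy0 := hy'.1 0
    refine ⟨max ((1 - b) * (y' 1 + y' 2) - b * (x' 1 + x' 2))
        ((1 - b) * (x' 1 + x' 2) - b * (y' 1 + y' 2)), ?_, ?_⟩
    · -- HasPosDeriv
      have hpath : ∀ θ : ℝ, θ ∈ Set.Icc (0:ℝ) 1 →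
          fNE R C (![1, 0, 0] + θ • (x' - ![1, 0, 0])) (![1, 0, 0] + θ • (y' - ![1, 0, 0])) =
            max (b + ((1 - b) * (y' 1 + y' 2) - b * (x' 1 + x' 2)) * θ +
                ((y' 1 + y' 2) * (b * (x' 1 + x' 2) - x' 1 - lam0 * x' 2)) * θ ^ 2)
              (b + ((1 - b) * (x' 1 + x' 2) - b * (y' 1 + y' 2)) * θ +
                ((x' 1 + x' 2) * (b * (y' 1 + y' 2) - y' 1 - mu0 * y' 2)) * θ ^ 2) := by
        intro θ hθ
        have hxv : (![1, 0, 0] + θ • (x' - ![1, 0, 0]) : Fin 3 → ℝ) =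
            ![1 + θ * (x' 0 - 1), θ * x' 1, θ * x' 2] := by
          funext i; fin_cases i <;> simp [Matrix.vecHead, Matrix.vecTail] <;> ring
        have hyv : (![1, 0, 0] + θ • (y' - ![1, 0, 0]) : Fin 3 → ℝ) =
            ![1 + θ * (y' 0 - 1), θ * y' 1, θ * y' 2] := by
          funext i; fin_cases i <;> simp [Matrix.vecHead, Matrix.vecTail] <;> ring
        rw [hxv, hyv]
        unfold fNE
        rw [hfRval _ _ (by simp; nlinarith [hθ.1, hθ.2]) (by simp; nlinarith [hθ.1])
              (by simp; nlinarith [hθ.1]),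
            hfCval _ _ (by simp; nlinarith [hθ.1, hθ.2]) (by simp; nlinarith [hθ.1])
              (by simp; nlinarith [hθ.1])]
        simp only [Matrix.cons_val_zero, Matrix.cons_val_one, Matrix.head_cons,
          Matrix.cons_val_two, Matrix.tail_cons]
        rw [show x' 0 = 1 - x' 1 - x' 2 by linarith, show y' 0 = 1 - y' 1 - y' 2 by linarith]
        congr 1 <;> ring
      unfold HasPosDeriv
      have hcont : Tendsto (fun θ : ℝ =>
          max (((1 - b) * (y' 1 + y' 2) - b * (x' 1 + x' 2)) +
              ((y' 1 + y' 2) * (b * (x' 1 + x' 2) - x' 1 - lam0 * x' 2)) * θ)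
            (((1 - b) * (x' 1 + x' 2) - b * (y' 1 + y' 2)) +
              ((x' 1 + x' 2) * (b * (y' 1 + y' 2) - y' 1 - mu0 * y' 2)) * θ))
          (nhdsWithin 0 (Set.Ioi 0))
          (nhds (max ((1 - b) * (y' 1 + y' 2) - b * (x' 1 + x' 2))
            ((1 - b) * (x' 1 + x' 2) - b * (y' 1 + y' 2)))) := by
        have h1 : Continuous fun θ : ℝ =>
            max (((1 - b) * (y' 1 + y' 2) - b * (x' 1 + x' 2)) +
                ((y' 1 + y' 2) * (b * (x' 1 + x' 2) - x' 1 - lam0 * x' 2)) * θ)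
              (((1 - b) * (x' 1 + x' 2) - b * (y' 1 + y' 2)) +
                ((x' 1 + x' 2) * (b * (y' 1 + y' 2) - y' 1 - mu0 * y' 2)) * θ) :=
          Continuous.max (continuous_const.add (continuous_const.mul continuous_id))
            (continuous_const.add (continuous_const.mul continuous_id))
        have h2 := (h1.tendsto 0).mono_left (nhdsWithin_le_nhds (s := Set.Ioi (0:ℝ)))
        simpa using h2
      refine Tendsto.congr' ?_ hcont
      filter_upwards [Ioo_mem_nhdsGT_of_mem (Set.left_mem_Ico.mpr one_pos)] with θ hθ
      have hθ0 : θ ≠ 0 := ne_of_gt hθ.1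
      have h0 : fNE R C (![1, 0, 0] + (0:ℝ) • (x' - ![1, 0, 0]))
          (![1, 0, 0] + (0:ℝ) • (y' - ![1, 0, 0])) = b := by
        have := hpath 0 (by norm_num)
        norm_num at this
        simpa using this
      show _ = (fNE R C (![1, 0, 0] + θ • (x' - ![1, 0, 0]))
          (![1, 0, 0] + θ • (y' - ![1, 0, 0])) -
        fNE R C (![1, 0, 0] + (0:ℝ) • (x' - ![1, 0, 0]))
          (![1, 0, 0] + (0:ℝ) • (y' - ![1, 0, 0]))) / θ
      rw [hpath θ ⟨hθ.1.le, hθ.2.le⟩, h0]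
      rw [show ∀ p q c : ℝ, max p q - c = max (p - c) (q - c) from
        fun p q c => (max_sub_sub_right p q c).symm]
      rw [← max_div_div_right hθ.1.le]
      congr 1 <;> field_simp <;> ring
    · -- nonnegativity of the derivative
      rcases le_or_gt 0 ((1 - b) * (y' 1 + y' 2) - b * (x' 1 + x' 2)) with h | h
      · exact le_max_of_le_left h
      · refine le_max_of_le_right ?_
        nlinarith [mul_nonneg (by linarith : (0:ℝ) ≤ 1 - 2 * b)
          (by linarith : (0:ℝ) ≤ x' 1 + x' 2 + y' 1 + y' 2)]
  -- PART 4
  have hpart4 : ∀ α ∈ Set.Icc (0:ℝ) 1, ∀ β ∈ Set.Icc (0:ℝ) 1,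
      b ≤ fNE R C (α • ![(0:ℝ), 0, 1] + (1 - α) • ![1, 0, 0])
        (β • ![0, 0, 1] + (1 - β) • ![(1:ℝ), 0, 0]) := by
    intro α hα β hβ
    obtain ⟨hα0, hα1⟩ := hα; obtain ⟨hβ0, hβ1⟩ := hβ
    have hxv : (α • ![(0:ℝ), 0, 1] + (1 - α) • ![1, 0, 0]) = ![1 - α, 0, α] := by
      funext i; fin_cases i <;> simp [Matrix.vecHead, Matrix.vecTail] <;> ring
    have hyv : (β • ![(0:ℝ), 0, 1] + (1 - β) • ![(1:ℝ), 0, 0]) = ![1 - β, 0, β] := by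
      funext i; fin_cases i <;> simp [Matrix.vecHead, Matrix.vecTail] <;> ring
    rw [hxv, hyv]
    unfold fNE
    have h1 : fR R ![1 - α, 0, α] ![1 - β, 0, β] =
        b * (1 - α) * (1 - β) + β * (1 - α * lam0) := by
      rw [hfRval _ _ (by simp; linarith) (by simp) (by simp; linarith)]
      simp only [Matrix.cons_val_zero, Matrix.cons_val_one, Matrix.head_cons,
        Matrix.cons_val_two, Matrix.tail_cons]
      ring
    have h2 : fC C ![1 - α, 0, α] ![1 - β, 0, β] =
        b * (1 - α) * (1 - β) + α * (1 - mu0 * β) := by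
      rw [hfCval _ _ (by simp; linarith) (by simp) (by simp; linarith)]
      simp only [Matrix.cons_val_zero, Matrix.cons_val_one, Matrix.head_cons,
        Matrix.cons_val_two, Matrix.tail_cons]
      ring
    rw [h1, h2]
    exact core_ineq hb3 hb4 hmupos hmult1 hlampos hlamlt1 hmu0' hmu0'' hlam0' hlam0'' hb2' hα0 hα1 hβ0 hβ1
  exact ⟨hstat, ⟨hfeas, by rw [hVval, hIMin]⟩, hpart3, hpart4⟩

end TS
end
end

section
/- Let (x*,y*) be a stationary point with dual solution (ρ*,w*,z*), ρ* ∈ (0,1), and suppose f(x*,y*) = f(ũ,ṽ) = b. If either (i) S_C(x*) ∩ S_C(w*) ≠ ∅ and f_C(w*,z*) > f_R(w*,z*), or (ii) S_R(y*) ∩ S_R(z*) ≠ ∅ and f_R(w*,z*) > f_C(w*,z*), then f(x,y) ≥ b for every (x,y) in the boundary Γ₁ ∪ Γ₂ of the square Λ = {(αw*+(1−α)x*, βz*+(1−β)y*) : α,β ∈ [0,1]}. -/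
open scoped BigOperators Classical
open Matrix Filter

noncomputable section

namespace TS

variable {m n : ℕ}

section Aux
variable {k : ℕ}

lemma le_vmax (u : Fin (k+1) → ℝ) (i : Fin (k+1)) : u i ≤ vmax u :=
  le_ciSup ((Set.finite_range u).bddAbove) i

lemma vmax_le {u : Fin (k+1) → ℝ} {a : ℝ} (h : ∀ i, u i ≤ a) : vmax u ≤ a := ciSup_le h

lemma vmax_eq {u : Fin (k+1) → ℝ} {i : Fin (k+1)} (hi : i ∈ suppmax u) : vmax u = u i :=
  le_antisymm (vmax_le hi) (le_vmax u i)

lemma dot_le_vmax {x u : Fin (k+1) → ℝ} (hx : x ∈ Δ (k+1)) : x ⬝ᵥ u ≤ vmax u := by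
  have h1 : x ⬝ᵥ u ≤ ∑ i, x i * vmax u :=
    Finset.sum_le_sum fun i _ => mul_le_mul_of_nonneg_left (le_vmax u i) (hx.1 i)
  calc x ⬝ᵥ u ≤ ∑ i, x i * vmax u := h1
    _ = vmax u := by rw [← Finset.sum_mul, hx.2, one_mul]

lemma dot_eq_vmax {x u : Fin (k+1) → ℝ} (hx : x ∈ Δ (k+1)) (hs : supp x ⊆ suppmax u) :
    x ⬝ᵥ u = vmax u := by
  have h1 : ∀ i ∈ Finset.univ, x i * u i = x i * vmax u := by
    intro i _
    rcases eq_or_lt_of_le (hx.1 i) with h0 | h0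
    · rw [← h0]; ring
    · rw [vmax_eq (hs h0)]
  calc x ⬝ᵥ u = ∑ i, x i * vmax u := Finset.sum_congr rfl h1
    _ = vmax u := by rw [← Finset.sum_mul, hx.2, one_mul]

lemma convexOn_affine (e f : ℝ) : ConvexOn ℝ (Set.univ : Set ℝ) (fun θ => e + θ * f) := by
  refine ⟨convex_univ, fun x _ y _ s t hs ht hst => ?_⟩
  simp only [smul_eq_mul]
  apply le_of_eq
  linear_combination (-e) * hst

lemma concaveOn_affine (e f : ℝ) : ConcaveOn ℝ (Set.univ : Set ℝ) (fun θ => e + θ * f) := by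
  refine ⟨convex_univ, fun x _ y _ s t hs ht hst => ?_⟩
  simp only [smul_eq_mul]
  apply le_of_eq
  linear_combination e * hst

lemma convexOn_supAffine (A B : Fin (k+1) → ℝ) :
    ConvexOn ℝ (Set.univ : Set ℝ) (fun θ => ⨆ i, (A i + θ * B i)) := by
  refine ⟨convex_univ, fun x _ y _ s t hs ht hst => ?_⟩
  simp only [smul_eq_mul]
  refine ciSup_le fun i => ?_
  have h1 : A i + (s * x + t * y) * B i = s * (A i + x * B i) + t * (A i + y * B i) := by
    linear_combination (-(A i)) * hst
  rw [h1]
  have b1 : A i + x * B i ≤ ⨆ j, (A j + x * B j) :=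
    le_ciSup (f := fun j => A j + x * B j) ((Set.finite_range _).bddAbove) i
  have b2 : A i + y * B i ≤ ⨆ j, (A j + y * B j) :=
    le_ciSup (f := fun j => A j + y * B j) ((Set.finite_range _).bddAbove) i
  exact add_le_add (mul_le_mul_of_nonneg_left b1 hs) (mul_le_mul_of_nonneg_left b2 ht)

lemma stationary_mono {g : ℝ → ℝ} {d : ℝ} (hconv : ConvexOn ℝ Set.univ g)
    (hd : HasPosDeriv g d) (hd0 : 0 ≤ d) {θ : ℝ} (hθ : 0 ≤ θ) : g 0 ≤ g θ := by
  rcases eq_or_lt_of_le hθ with h | hθp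
  · rw [← h]
  have key : ∀ θ' ∈ Set.Ioo (0:ℝ) θ, (g θ' - g 0) / θ' ≤ (g θ - g 0) / θ := by
    intro θ' hθ'
    obtain ⟨h1, h2⟩ := hθ'
    have hcomb := hconv.2 (Set.mem_univ θ) (Set.mem_univ (0:ℝ))
      (show (0:ℝ) ≤ θ'/θ by positivity)
      (show (0:ℝ) ≤ 1 - θ'/θ by rw [sub_nonneg]; exact div_le_one_of_le₀ h2.le hθp.le)
      (show θ'/θ + (1 - θ'/θ) = 1 by ring)
    simp only [smul_eq_mul, mul_zero, add_zero] at hcomb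
    have hx : θ' / θ * θ = θ' := by field_simp
    rw [hx] at hcomb
    have hm := mul_le_mul_of_nonneg_left hcomb hθp.le
    have hr : θ * (θ' / θ * g θ + (1 - θ' / θ) * g 0) = θ' * g θ + (θ - θ') * g 0 := by
      field_simp
    rw [hr] at hm
    rw [div_le_div_iff₀ h1 hθp]
    nlinarith [hm]
  have hle : d ≤ (g θ - g 0) / θ := by
    refine le_of_tendsto hd ?_
    exact Filter.eventually_of_mem (Ioo_mem_nhdsGT_of_mem ⟨le_refl _, hθp⟩) key
  have h0 : (0:ℝ) ≤ (g θ - g 0) / θ := le_trans hd0 hle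
  have := (le_div_iff₀ hθp).mp h0
  linarith


lemma convexOn_path_y {m n : ℕ} (R C : Matrix (Fin (m+1)) (Fin (n+1)) ℝ)
    (x : Fin (m+1) → ℝ) (y v : Fin (n+1) → ℝ) :
    ConvexOn ℝ Set.univ (fun θ : ℝ => fNE R C x (y + θ • v)) := by
  have hR : ConvexOn ℝ Set.univ (fun θ : ℝ => fR R x (y + θ • v)) := by
    have h := (convexOn_supAffine (fun i => R.mulVec y i) (fun i => R.mulVec v i)).sub
      (concaveOn_affine (x ⬝ᵥ R.mulVec y) (x ⬝ᵥ R.mulVec v))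
    refine h.congr fun θ _ => ?_
    simp only [Pi.sub_apply, fR, vmax, Matrix.mulVec_add, Matrix.mulVec_smul, dotProduct_add,
      dotProduct_smul, Pi.add_apply, Pi.smul_apply, smul_eq_mul]
  have hC : ConvexOn ℝ Set.univ (fun θ : ℝ => fC C x (y + θ • v)) := by
    have h := convexOn_affine (vmax (Matrix.vecMul x C) - x ⬝ᵥ C.mulVec y) (-(x ⬝ᵥ C.mulVec v))
    convert h using 1
    funext θ
    simp only [fC, Matrix.mulVec_add, Matrix.mulVec_smul, dotProduct_add,
      dotProduct_smul, smul_eq_mul]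
    ring
  exact hR.sup hC

lemma convexOn_path_x {m n : ℕ} (R C : Matrix (Fin (m+1)) (Fin (n+1)) ℝ)
    (x v : Fin (m+1) → ℝ) (y : Fin (n+1) → ℝ) :
    ConvexOn ℝ Set.univ (fun θ : ℝ => fNE R C (x + θ • v) y) := by
  have hR : ConvexOn ℝ Set.univ (fun θ : ℝ => fR R (x + θ • v) y) := by
    have h := convexOn_affine (vmax (R.mulVec y) - x ⬝ᵥ R.mulVec y) (-(v ⬝ᵥ R.mulVec y))
    convert h using 1
    funext θ
    simp only [fR, add_dotProduct, smul_dotProduct, smul_eq_mul]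
    ring
  have hC : ConvexOn ℝ Set.univ (fun θ : ℝ => fC C (x + θ • v) y) := by
    have h := (convexOn_supAffine (fun j => Matrix.vecMul x C j) (fun j => Matrix.vecMul v C j)).sub
      (concaveOn_affine (x ⬝ᵥ C.mulVec y) (v ⬝ᵥ C.mulVec y))
    refine h.congr fun θ _ => ?_
    simp only [Pi.sub_apply, fC, vmax, Matrix.add_vecMul, Matrix.smul_vecMul, add_dotProduct,
      smul_dotProduct, Pi.add_apply, Pi.smul_apply, smul_eq_mul]
  exact hR.sup hC

lemma quarter_le_bTS : (1/4 : ℝ) ≤ bTS := by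
  have hbdd : BddAbove {r : ℝ | ∃ s ∈ Set.Icc (0:ℝ) 1, ∃ t ∈ Set.Icc (0:ℝ) 1, r = gTS s t} := by
    refine ⟨1, fun r hr => ?_⟩
    obtain ⟨s, hs, t, ht, rfl⟩ := hr
    have : s * t / (s + t) ≤ 1 := by
      rcases eq_or_lt_of_le (by linarith [hs.1, ht.1] : (0:ℝ) ≤ s + t) with h | h
      · rw [← h]; simp
      · rw [div_le_one h]; nlinarith [hs.1, hs.2, ht.1, ht.2]
    calc gTS s t ≤ s * t / (s + t) := min_le_left _ _
      _ ≤ 1 := this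
  refine le_csSup hbdd ?_
  refine ⟨1/2, by norm_num, 1/2, by norm_num, ?_⟩
  norm_num [gTS]


lemma fR_combo_x {m n : ℕ} (R : Matrix (Fin (m+1)) (Fin (n+1)) ℝ)
    (x w : Fin (m+1) → ℝ) (z : Fin (n+1) → ℝ) (t : ℝ) :
    fR R (t • x + (1 - t) • w) z = t * fR R x z + (1 - t) * fR R w z := by
  simp only [fR, add_dotProduct, smul_dotProduct, smul_eq_mul]
  ring

lemma fC_combo_y {m n : ℕ} (C : Matrix (Fin (m+1)) (Fin (n+1)) ℝ)
    (x : Fin (m+1) → ℝ) (y z : Fin (n+1) → ℝ) (t : ℝ) :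
    fC C x (t • y + (1 - t) • z) = t * fC C x y + (1 - t) * fC C x z := by
  simp only [fC, Matrix.mulVec_add, Matrix.mulVec_smul, dotProduct_add, dotProduct_smul,
    smul_eq_mul]
  ring

lemma fC_combo_x_le {m n : ℕ} (C : Matrix (Fin (m+1)) (Fin (n+1)) ℝ)
    (x w : Fin (m+1) → ℝ) (z : Fin (n+1) → ℝ) {t : ℝ} (ht0 : 0 ≤ t) (ht1 : t ≤ 1) :
    fC C (t • x + (1 - t) • w) z ≤ t * fC C x z + (1 - t) * fC C w z := by
  have hsup : vmax (Matrix.vecMul (t • x + (1 - t) • w) C) ≤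
      t * vmax (Matrix.vecMul x C) + (1 - t) * vmax (Matrix.vecMul w C) := by
    refine vmax_le fun j => ?_
    have h1 : (Matrix.vecMul (t • x + (1 - t) • w) C) j =
        t * (Matrix.vecMul x C) j + (1 - t) * (Matrix.vecMul w C) j := by
      simp [Matrix.add_vecMul, Matrix.smul_vecMul]
    rw [h1]
    exact add_le_add (mul_le_mul_of_nonneg_left (le_vmax _ j) ht0)
      (mul_le_mul_of_nonneg_left (le_vmax _ j) (by linarith))
  simp only [fC, add_dotProduct, smul_dotProduct, smul_eq_mul]
  nlinarith [hsup]

lemma fC_combo_x_ge {m n : ℕ} (C : Matrix (Fin (m+1)) (Fin (n+1)) ℝ)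
    (x w : Fin (m+1) → ℝ) (z : Fin (n+1) → ℝ) (t : ℝ) {j : Fin (n+1)}
    (hjx : j ∈ SC C x) (hjw : j ∈ SC C w) :
    t * fC C x z + (1 - t) * fC C w z ≤ fC C (t • x + (1 - t) • w) z := by
  have hsup : t * vmax (Matrix.vecMul x C) + (1 - t) * vmax (Matrix.vecMul w C) ≤
      vmax (Matrix.vecMul (t • x + (1 - t) • w) C) := by
    have h2 := le_vmax (Matrix.vecMul (t • x + (1 - t) • w) C) j
    rw [vmax_eq hjx, vmax_eq hjw]
    refine le_trans (le_of_eq ?_) h2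
    simp [Matrix.add_vecMul, Matrix.smul_vecMul]
  simp only [fC, add_dotProduct, smul_dotProduct, smul_eq_mul]
  nlinarith [hsup]

lemma fR_combo_y_le {m n : ℕ} (R : Matrix (Fin (m+1)) (Fin (n+1)) ℝ)
    (x : Fin (m+1) → ℝ) (y z : Fin (n+1) → ℝ) {t : ℝ} (ht0 : 0 ≤ t) (ht1 : t ≤ 1) :
    fR R x (t • y + (1 - t) • z) ≤ t * fR R x y + (1 - t) * fR R x z := by
  have hsup : vmax (t • R.mulVec y + (1 - t) • R.mulVec z) ≤
      t * vmax (R.mulVec y) + (1 - t) * vmax (R.mulVec z) := by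
    refine vmax_le fun i => ?_
    have h1 : (t • R.mulVec y + (1 - t) • R.mulVec z) i =
        t * (R.mulVec y) i + (1 - t) * (R.mulVec z) i := by
      simp
    rw [h1]
    exact add_le_add (mul_le_mul_of_nonneg_left (le_vmax _ i) ht0)
      (mul_le_mul_of_nonneg_left (le_vmax _ i) (by linarith))
  simp only [fR, Matrix.mulVec_add, Matrix.mulVec_smul, dotProduct_add, dotProduct_smul,
    smul_eq_mul]
  nlinarith [hsup]

lemma fR_combo_y_ge {m n : ℕ} (R : Matrix (Fin (m+1)) (Fin (n+1)) ℝ)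
    (x : Fin (m+1) → ℝ) (y z : Fin (n+1) → ℝ) (t : ℝ) {i : Fin (m+1)}
    (hiy : i ∈ SR R y) (hiz : i ∈ SR R z) :
    t * fR R x y + (1 - t) * fR R x z ≤ fR R x (t • y + (1 - t) • z) := by
  have hsup : t * vmax (R.mulVec y) + (1 - t) * vmax (R.mulVec z) ≤
      vmax (t • R.mulVec y + (1 - t) • R.mulVec z) := by
    have h2 := le_vmax (t • R.mulVec y + (1 - t) • R.mulVec z) i
    rw [vmax_eq hiy, vmax_eq hiz]
    refine le_trans (le_of_eq ?_) h2
    simp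
  simp only [fR, Matrix.mulVec_add, Matrix.mulVec_smul, dotProduct_add, dotProduct_smul,
    smul_eq_mul]
  nlinarith [hsup]


end Aux

set_option maxHeartbeats 2000000 in
/-- if `f(x*,y*) = f(ũ,ṽ) = b` and one of the two side conditions holds,
then `f ≥ b` on the boundary `Γ₁ ∪ Γ₂` of the square `Λ`. -/
theorem stmt14 {m n : ℕ} (R C : Matrix (Fin (m+1)) (Fin (n+1)) ℝ)
    (hR : ∀ i j, R i j ∈ Set.Icc (0:ℝ) 1) (hC : ∀ i j, C i j ∈ Set.Icc (0:ℝ) 1)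
    (xs : Fin (m+1) → ℝ) (ys : Fin (n+1) → ℝ) (ρs : ℝ) (ws : Fin (m+1) → ℝ) (zs : Fin (n+1) → ℝ)
    (hxs : xs ∈ Δ (m+1)) (hys : ys ∈ Δ (n+1))
    (hstat : IsStationary R C xs ys)
    (hdual : IsDualSolution R C xs ys ρs ws zs)
    (hρ : ρs ∈ Set.Ioo (0:ℝ) 1)
    (hb1 : fNE R C xs ys = bTS)
    (hb2 : fNE R C (tildeUV R C xs ys ws zs).1 (tildeUV R C xs ys ws zs).2 = bTS)
    (hcase : ((SC C xs ∩ SC C ws).Nonempty ∧ fR R ws zs < fC C ws zs) ∨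
             ((SR R ys ∩ SR R zs).Nonempty ∧ fC C ws zs < fR R ws zs)) :
    ∀ p ∈ (({p | ∃ α ∈ Set.Icc (0:ℝ) 1, p = (α • xs + (1 - α) • ws, ys)} ∪
        {p | ∃ β ∈ Set.Icc (0:ℝ) 1, p = (xs, β • ys + (1 - β) • zs)} :
        Set ((Fin (m+1) → ℝ) × (Fin (n+1) → ℝ))) ∪ ({p | ∃ α ∈ Set.Icc (0:ℝ) 1, p = (α • xs + (1 - α) • ws, zs)} ∪
        {p | ∃ β ∈ Set.Icc (0:ℝ) 1, p = (ws, β • ys + (1 - β) • zs)} :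
        Set ((Fin (m+1) → ℝ) × (Fin (n+1) → ℝ)))),
      bTS ≤ fNE R C p.1 p.2 := by
  classical
  obtain ⟨⟨hρ01, hwsΔ, hsuppw, hzsΔ, hsuppz⟩, -⟩ := hdual
  have hbq : (1/4 : ℝ) ≤ bTS := quarter_le_bTS
  have hbpos : (0:ℝ) < bTS := by linarith
  -- stationarity along the two coordinate directions
  have SA : ∀ y' ∈ Δ (n+1), ∀ θ : ℝ, 0 ≤ θ → bTS ≤ fNE R C xs (ys + θ • (y' - ys)) := by
    intro y' hy' θ hθ
    obtain ⟨d, hdv, hd0⟩ := hstat xs hxs y' hy'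
    have hfun : (fun θ : ℝ => fNE R C (xs + θ • (xs - xs)) (ys + θ • (y' - ys)))
        = fun θ : ℝ => fNE R C xs (ys + θ • (y' - ys)) := by
      funext t; simp
    rw [hfun] at hdv
    have hmono := stationary_mono (convexOn_path_y R C xs ys (y' - ys)) hdv hd0 hθ
    simp only [zero_smul, add_zero] at hmono
    rw [hb1] at hmono
    exact hmono
  have SB : ∀ x' ∈ Δ (m+1), ∀ θ : ℝ, 0 ≤ θ → bTS ≤ fNE R C (xs + θ • (x' - xs)) ys := by
    intro x' hx' θ hθ
    obtain ⟨d, hdv, hd0⟩ := hstat x' hx' ys hys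
    have hfun : (fun θ : ℝ => fNE R C (xs + θ • (x' - xs)) (ys + θ • (ys - ys)))
        = fun θ : ℝ => fNE R C (xs + θ • (x' - xs)) ys := by
      funext t; simp
    rw [hfun] at hdv
    have hmono := stationary_mono (convexOn_path_x R C xs (x' - xs) ys) hdv hd0 hθ
    simp only [zero_smul, add_zero] at hmono
    rw [hb1] at hmono
    exact hmono
  -- basic identities
  have hfCxz : fC C xs zs = 0 := by
    have hxCz : xs ⬝ᵥ C.mulVec zs = vmax (Matrix.vecMul xs C) := by
      rw [Matrix.dotProduct_mulVec, dotProduct_comm]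
      exact dot_eq_vmax hzsΔ hsuppz
    rw [fC, hxCz, sub_self]
  have hfRwy : fR R ws ys = 0 := by
    have h1 : ws ⬝ᵥ R.mulVec ys = vmax (R.mulVec ys) := dot_eq_vmax hwsΔ hsuppw
    rw [fR, h1, sub_self]
  have hc0 : 0 ≤ fR R ws zs := by
    have := dot_le_vmax (u := R.mulVec zs) hwsΔ
    rw [fR]; linarith
  have hd0d : 0 ≤ fC C ws zs := by
    have h1 : ws ⬝ᵥ C.mulVec zs ≤ vmax (Matrix.vecMul ws C) := by
      rw [Matrix.dotProduct_mulVec, dotProduct_comm]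
      exact dot_le_vmax hzsΔ
    rw [fC]; linarith
  -- f(x*,z*) ≥ b, hence f_R(x*,z*) ≥ b
  have ha : bTS ≤ fR R xs zs := by
    have h1 := SA zs hzsΔ 1 zero_le_one
    have h2 : ys + (1:ℝ) • (zs - ys) = zs := by module
    rw [h2] at h1
    rw [fNE, hfCxz] at h1
    rcases le_max_iff.mp h1 with h | h
    · exact h
    · linarith
  -- f(w*,y*) ≥ b, hence f_C(w*,y*) ≥ b
  have ha' : bTS ≤ fC C ws ys := by
    have h1 := SB ws hwsΔ 1 zero_le_one
    have h2 : xs + (1:ℝ) • (ws - xs) = ws := by module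
    rw [h2] at h1
    rw [fNE, hfRwy] at h1
    rcases le_max_iff.mp h1 with h | h
    · linarith
    · exact h
  intro pt hpt
  have hG1a : ∀ α : ℝ, α ∈ Set.Icc (0:ℝ) 1 → bTS ≤ fNE R C (α • xs + (1 - α) • ws) ys := by
    intro α hα
    have h1 := SB ws hwsΔ (1 - α) (by linarith [hα.2])
    have h2 : xs + (1 - α) • (ws - xs) = α • xs + (1 - α) • ws := by module
    rw [h2] at h1
    exact h1
  have hG1b : ∀ β : ℝ, β ∈ Set.Icc (0:ℝ) 1 → bTS ≤ fNE R C xs (β • ys + (1 - β) • zs) := by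
    intro β hβ
    have h1 := SA zs hzsΔ (1 - β) (by linarith [hβ.2])
    have h2 : ys + (1 - β) • (zs - ys) = β • ys + (1 - β) • zs := by module
    rw [h2] at h1
    exact h1
  rcases hcase with ⟨hj, hlt⟩ | ⟨hi, hlt⟩
  · -- case (i)
    obtain ⟨j, hjx, hjw⟩ := hj
    have hb2' : fNE R C (pstar R C xs ws zs • ws + (1 - pstar R C xs ws zs) • xs) zs = bTS := by
      have hcond : fR R ws zs ≤ fC C ws zs := le_of_lt hlt
      simp only [tildeUV, if_pos hcond] at hb2
      exact hb2
    have hpeq : pstar R C xs ws zs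
        = fR R xs zs / (fR R xs zs + fC C ws zs - fR R ws zs) := rfl
    set p := pstar R C xs ws zs with hp_def
    have hden : 0 < fR R xs zs + fC C ws zs - fR R ws zs := by linarith
    have hp0 : 0 ≤ p := by
      rw [hpeq]; exact div_nonneg (by linarith) (le_of_lt hden)
    have hp1 : p ≤ 1 := by
      rw [hpeq, div_le_one hden]; linarith
    have hfRu : fR R (p • ws + (1 - p) • xs) zs
        = p * fR R ws zs + (1 - p) * fR R xs zs := fR_combo_x R ws xs zs p
    have hfCu : fC C (p • ws + (1 - p) • xs) zs
        ≤ p * fC C ws zs + (1 - p) * fC C xs zs := fC_combo_x_le C ws xs zs hp0 hp1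
    have hI : p * fR R ws zs + (1 - p) * fR R xs zs = p * fC C ws zs := by
      rw [hpeq]
      field_simp
      ring
    have hfCu' : fC C (p • ws + (1 - p) • xs) zs ≤ p * fC C ws zs := by
      rw [hfCxz] at hfCu; linarith
    have hMb : bTS = p * fC C ws zs := by
      rw [← hb2', fNE, hfRu, hI]
      exact max_eq_left hfCu'
    have hdb : bTS ≤ fC C ws zs := by nlinarith [mul_nonneg (by linarith : (0:ℝ) ≤ 1 - p) hd0d]
    rcases hpt with (hΓ | hΓ) | (hΓ | hΓ)
    · obtain ⟨α, hα, rfl⟩ := hΓ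
      exact hG1a α hα
    · obtain ⟨β, hβ, rfl⟩ := hΓ
      exact hG1b β hβ
    · obtain ⟨α, hα, rfl⟩ := hΓ
      show bTS ≤ fNE R C (α • xs + (1 - α) • ws) zs
      have hfRα : fR R (α • xs + (1 - α) • ws) zs
          = α * fR R xs zs + (1 - α) * fR R ws zs := fR_combo_x R xs ws zs α
      have hfCα : α * fC C xs zs + (1 - α) * fC C ws zs
          ≤ fC C (α • xs + (1 - α) • ws) zs := fC_combo_x_ge C xs ws zs α hjx hjw
      rw [hfCxz] at hfCα
      rcases le_or_gt bTS ((1 - α) * fC C ws zs) with h | h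
      · refine le_trans ?_ (le_max_right _ _)
        linarith
      · have hdpos : 0 < fC C ws zs := lt_of_lt_of_le hbpos hdb
        have hap : 1 - α < p := by
          rw [hMb] at h
          exact lt_of_mul_lt_mul_right h hd0d
        refine le_trans ?_ (le_max_left _ _)
        rw [hfRα]
        rcases le_or_gt (fR R ws zs) (fR R xs zs) with hac | hac
        · nlinarith [mul_nonneg (by linarith : (0:ℝ) ≤ α - (1 - p))
            (by linarith : (0:ℝ) ≤ fR R xs zs - fR R ws zs)]
        · nlinarith [mul_nonneg (by linarith [hα.2] : (0:ℝ) ≤ 1 - α)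
            (by linarith : (0:ℝ) ≤ fR R ws zs - fR R xs zs)]
    · obtain ⟨β, hβ, rfl⟩ := hΓ
      show bTS ≤ fNE R C ws (β • ys + (1 - β) • zs)
      have hfCβ : fC C ws (β • ys + (1 - β) • zs)
          = β * fC C ws ys + (1 - β) * fC C ws zs := fC_combo_y C ws ys zs β
      refine le_trans ?_ (le_max_right _ _)
      rw [hfCβ]
      nlinarith [mul_nonneg hβ.1 (by linarith : (0:ℝ) ≤ fC C ws ys - bTS),
        mul_nonneg (by linarith [hβ.2] : (0:ℝ) ≤ 1 - β)
          (by linarith : (0:ℝ) ≤ fC C ws zs - bTS)]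
  · -- case (ii)
    obtain ⟨i, hiy, hiz⟩ := hi
    have hb2' : fNE R C ws (qstar R C ws ys zs • zs + (1 - qstar R C ws ys zs) • ys) = bTS := by
      have hcond : ¬ (fR R ws zs ≤ fC C ws zs) := not_le.mpr hlt
      simp only [tildeUV, if_neg hcond] at hb2
      exact hb2
    have hqeq : qstar R C ws ys zs
        = fC C ws ys / (fC C ws ys + fR R ws zs - fC C ws zs) := rfl
    set q := qstar R C ws ys zs with hq_def
    have hden : 0 < fC C ws ys + fR R ws zs - fC C ws zs := by linarith
    have hq0 : 0 ≤ q := by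
      rw [hqeq]; exact div_nonneg (by linarith) (le_of_lt hden)
    have hq1 : q ≤ 1 := by
      rw [hqeq, div_le_one hden]; linarith
    have hfCv : fC C ws (q • zs + (1 - q) • ys)
        = q * fC C ws zs + (1 - q) * fC C ws ys := fC_combo_y C ws zs ys q
    have hfRv : fR R ws (q • zs + (1 - q) • ys)
        ≤ q * fR R ws zs + (1 - q) * fR R ws ys := fR_combo_y_le R ws zs ys hq0 hq1
    have hI : q * fC C ws zs + (1 - q) * fC C ws ys = q * fR R ws zs := by
      rw [hqeq]
      field_simp
      ring
    have hfRv' : fR R ws (q • zs + (1 - q) • ys) ≤ q * fR R ws zs := by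
      rw [hfRwy] at hfRv; linarith
    have hMb : bTS = q * fR R ws zs := by
      rw [← hb2', fNE, hfCv, hI]
      exact max_eq_right hfRv'
    have hcb : bTS ≤ fR R ws zs := by nlinarith [mul_nonneg (by linarith : (0:ℝ) ≤ 1 - q) hc0]
    rcases hpt with (hΓ | hΓ) | (hΓ | hΓ)
    · obtain ⟨α, hα, rfl⟩ := hΓ
      exact hG1a α hα
    · obtain ⟨β, hβ, rfl⟩ := hΓ
      exact hG1b β hβ
    · obtain ⟨α, hα, rfl⟩ := hΓ
      show bTS ≤ fNE R C (α • xs + (1 - α) • ws) zs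
      have hfRα : fR R (α • xs + (1 - α) • ws) zs
          = α * fR R xs zs + (1 - α) * fR R ws zs := fR_combo_x R xs ws zs α
      refine le_trans ?_ (le_max_left _ _)
      rw [hfRα]
      nlinarith [mul_nonneg hα.1 (by linarith : (0:ℝ) ≤ fR R xs zs - bTS),
        mul_nonneg (by linarith [hα.2] : (0:ℝ) ≤ 1 - α)
          (by linarith : (0:ℝ) ≤ fR R ws zs - bTS)]
    · obtain ⟨β, hβ, rfl⟩ := hΓ
      show bTS ≤ fNE R C ws (β • ys + (1 - β) • zs)
      have hfCβ : fC C ws (β • ys + (1 - β) • zs)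
          = β * fC C ws ys + (1 - β) * fC C ws zs := fC_combo_y C ws ys zs β
      have hfRβ : β * fR R ws ys + (1 - β) * fR R ws zs
          ≤ fR R ws (β • ys + (1 - β) • zs) := fR_combo_y_ge R ws ys zs β hiy hiz
      rw [hfRwy] at hfRβ
      rcases le_or_gt bTS ((1 - β) * fR R ws zs) with h | h
      · refine le_trans ?_ (le_max_left _ _)
        linarith
      · have hcpos : 0 < fR R ws zs := lt_of_lt_of_le hbpos hcb
        have hbq' : 1 - β < q := by
          rw [hMb] at h
          exact lt_of_mul_lt_mul_right h hc0
        refine le_trans ?_ (le_max_right _ _)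
        rw [hfCβ]
        rcases le_or_gt (fC C ws zs) (fC C ws ys) with hac | hac
        · nlinarith [mul_nonneg (by linarith : (0:ℝ) ≤ β - (1 - q))
            (by linarith : (0:ℝ) ≤ fC C ws ys - fC C ws zs)]
        · nlinarith [mul_nonneg (by linarith [hβ.2] : (0:ℝ) ≤ 1 - β)
            (by linarith : (0:ℝ) ≤ fC C ws zs - fC C ws ys)]


end TS
end
end

section
/- Let (x*,y*) be a stationary point with dual solution (ρ*,w*,z*). Then for all p, q ∈ [0,1]: f_R(pw*+(1−p)x*, z*) = (f_R(w*,z*) − f_R(x*,z*))·p + f_R(x*,z*); f_C(pw*+(1−p)x*, z*) ≤ p·f_C(w*,z*); f_C(w*, qz*+(1−q)y*) = (f_C(w*,z*) − f_C(w*,y*))·q + f_C(w*,y*); and f_R(w*, qz*+(1−q)y*) ≤ q·f_R(w*,z*). -/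
open scoped BigOperators Classical
open Matrix Filter

noncomputable section

namespace TS

variable {m n : ℕ}

private lemma bddA {k : ℕ} (u : Fin k → ℝ) : BddAbove (Set.range u) :=
  (Set.finite_range u).bddAbove

private lemma vmax_eq_of_mem {k : ℕ} {u : Fin k → ℝ} {i : Fin k} (hi : i ∈ suppmax u) :
    vmax u = u i := by
  haveI : Nonempty (Fin k) := ⟨i⟩
  exact le_antisymm (ciSup_le hi) (le_ciSup (bddA u) i)

private lemma dot_vmax {k : ℕ} {u z : Fin k → ℝ} (hz : z ∈ Δ k)
    (hs : supp z ⊆ suppmax u) : z ⬝ᵥ u = vmax u := by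
  have h : ∀ j, z j * u j = z j * vmax u := by
    intro j
    rcases eq_or_lt_of_le (hz.1 j) with h | h
    · rw [← h]; ring
    · rw [vmax_eq_of_mem (hs h)]
  calc z ⬝ᵥ u = ∑ j, z j * u j := rfl
    _ = ∑ j, z j * vmax u := by simp_rw [h]
    _ = (∑ j, z j) * vmax u := by rw [Finset.sum_mul]
    _ = vmax u := by rw [hz.2, one_mul]

private lemma vmax_smul_add {k : ℕ} (a b : ℝ) (ha : 0 ≤ a) (hb : 0 ≤ b)
    (u v : Fin (k+1) → ℝ) :
    vmax (a • u + b • v) ≤ a * vmax u + b * vmax v := by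
  apply ciSup_le
  intro i
  simp only [Pi.add_apply, Pi.smul_apply, smul_eq_mul]
  exact add_le_add (mul_le_mul_of_nonneg_left (le_ciSup (bddA u) i) ha)
    (mul_le_mul_of_nonneg_left (le_ciSup (bddA v) i) hb)

/-- the linear identities and linear upper bounds for `f_R`, `f_C`
along the boundary of the square `Λ`. -/
theorem stmt18 {m n : ℕ} (R C : Matrix (Fin (m+1)) (Fin (n+1)) ℝ)
    (hR : ∀ i j, R i j ∈ Set.Icc (0:ℝ) 1) (hC : ∀ i j, C i j ∈ Set.Icc (0:ℝ) 1)
    (xs : Fin (m+1) → ℝ) (ys : Fin (n+1) → ℝ) (ρs : ℝ) (ws : Fin (m+1) → ℝ) (zs : Fin (n+1) → ℝ)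
    (hxs : xs ∈ Δ (m+1)) (hys : ys ∈ Δ (n+1))
    (hstat : IsStationary R C xs ys)
    (hdual : IsDualSolution R C xs ys ρs ws zs) :
    ∀ p ∈ Set.Icc (0:ℝ) 1, ∀ q ∈ Set.Icc (0:ℝ) 1,
      fR R (p • ws + (1 - p) • xs) zs = (fR R ws zs - fR R xs zs) * p + fR R xs zs ∧
      fC C (p • ws + (1 - p) • xs) zs ≤ p * fC C ws zs ∧
      fC C ws (q • zs + (1 - q) • ys) = (fC C ws zs - fC C ws ys) * q + fC C ws ys ∧
      fR R ws (q • zs + (1 - q) • ys) ≤ q * fR R ws zs := by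
  obtain ⟨⟨hρ, hwΔ, hwS, hzΔ, hzS⟩, -⟩ := hdual
  intro p hp q hq
  have hfCxz : xs ⬝ᵥ C.mulVec zs = vmax (Matrix.vecMul xs C) := by
    rw [Matrix.dotProduct_mulVec, dotProduct_comm]
    exact dot_vmax hzΔ hzS
  have hfRwy : ws ⬝ᵥ R.mulVec ys = vmax (R.mulVec ys) := dot_vmax hwΔ hwS
  have hmul : R.mulVec (q • zs + (1 - q) • ys)
      = q • R.mulVec zs + (1 - q) • R.mulVec ys := by
    rw [Matrix.mulVec_add, Matrix.mulVec_smul, Matrix.mulVec_smul]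
  have hmulC : C.mulVec (q • zs + (1 - q) • ys)
      = q • C.mulVec zs + (1 - q) • C.mulVec ys := by
    rw [Matrix.mulVec_add, Matrix.mulVec_smul, Matrix.mulVec_smul]
  have hvec : Matrix.vecMul (p • ws + (1 - p) • xs) C
      = p • Matrix.vecMul ws C + (1 - p) • Matrix.vecMul xs C := by
    rw [Matrix.add_vecMul, Matrix.smul_vecMul, Matrix.smul_vecMul]
  refine ⟨?_, ?_, ?_, ?_⟩
  · simp only [fR, add_dotProduct, smul_dotProduct, smul_eq_mul]
    ring
  · have h2 := vmax_smul_add p (1-p) hp.1 (by linarith [hp.2]) (Matrix.vecMul ws C)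
      (Matrix.vecMul xs C)
    simp only [fC, hvec, add_dotProduct, smul_dotProduct, smul_eq_mul]
    rw [hfCxz]
    ring_nf
    ring_nf at h2
    linarith [h2]
  · simp only [fC, hmulC, dotProduct_add, dotProduct_smul, smul_eq_mul]
    ring
  · have h2 := vmax_smul_add q (1-q) hq.1 (by linarith [hq.2]) (R.mulVec zs) (R.mulVec ys)
    simp only [fR, hmul, dotProduct_add, dotProduct_smul, smul_eq_mul]
    rw [hfRwy]
    ring_nf
    ring_nf at h2
    linarith [h2]

end TS
end
end
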